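/- Let B = {B^(1),…,B^(m)} be a collection of m dichotomic observables on a state space S such that the set {u, B^(1)_+,…,B^(m)_+} is linearly independent in the vector space of affine functionals on S. Then an observable A with finite outcome set Λ is contained in sim(B) if and only if every effect A_y (y ∈ Λ) lies in the convex hull of {B^(i)_+, B^(i)_− : 1 ≤ i ≤ m} ∪ {o, u}. -/
import Mathlib


open scoped BigOperators

/-- A real-valued function on the state space `S` is affine if it respects convex
combinations of states. -/
def AffineOn {V : Type*} [NormedAddCommGroup V] [NormedSpace ℝ V] (S : Set V)
    (e : S → ℝ) : Prop :=
  ∀ (s₁ s₂ : S) (p : ℝ), 0 ≤ p → p ≤ 1 →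
    ∀ h : p • (s₁ : V) + (1 - p) • (s₂ : V) ∈ S,
      e ⟨p • (s₁ : V) + (1 - p) • (s₂ : V), h⟩ = p * e s₁ + (1 - p) * e s₂

/-- An effect on `S`: an affine function with values in `[0,1]`. -/
def IsEffectFn {V : Type*} [NormedAddCommGroup V] [NormedSpace ℝ V] (S : Set V)
    (e : S → ℝ) : Prop :=
  AffineOn S e ∧ ∀ s, 0 ≤ e s ∧ e s ≤ 1

/-- An observable on the state space `S` with finite outcome set `Fin n`:
a family of effects summing to the unit effect. -/
structure Obs {V : Type*} [NormedAddCommGroup V] [NormedSpace ℝ V] (S : Set V) where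
  n : ℕ
  eff : Fin n → S → ℝ
  affine : ∀ x, AffineOn S (eff x)
  nonneg : ∀ x s, 0 ≤ eff x s
  normalized : ∀ s, ∑ x, eff x s = 1

variable {V : Type*} [NormedAddCommGroup V] [NormedSpace ℝ V] {S : Set V}

/-- `B` is a postprocessing of `A` (written `A → B`): `B` is obtained from `A` by a
stochastic matrix. -/
def Postprocess (A B : Obs S) : Prop :=
  ∃ ν : Fin A.n → Fin B.n → ℝ,
    (∀ x y, 0 ≤ ν x y) ∧ (∀ x, ∑ y, ν x y = 1) ∧
    ∀ y s, B.eff y s = ∑ x, ν x y * A.eff x s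

/-- Postprocessing equivalence `A ↔ B`. -/
def PPEquiv (A B : Obs S) : Prop := Postprocess A B ∧ Postprocess B A

/-- `A` is postprocessing clean: whenever `B → A` also `A → B`. -/
def PPClean (A : Obs S) : Prop := ∀ B : Obs S, Postprocess B A → Postprocess A B

/-- A nonzero effect is indecomposable if in any decomposition into two nonzero
effects, both summands are positive scalar multiples of it. -/
def IsIndecomposableEffect (S : Set V) (e : S → ℝ) : Prop :=
  e ≠ 0 ∧ ∀ e₁ e₂ : S → ℝ, IsEffectFn S e₁ → IsEffectFn S e₂ → e₁ ≠ 0 → e₂ ≠ 0 →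
    e = e₁ + e₂ →
    (∃ c : ℝ, 0 < c ∧ e₁ = c • e) ∧ (∃ c : ℝ, 0 < c ∧ e₂ = c • e)

/-- An observable is indecomposable if all its nonzero effects are indecomposable. -/
def IndecomposableObs (A : Obs S) : Prop :=
  ∀ x, A.eff x ≠ 0 → IsIndecomposableEffect S (A.eff x)

/-- An observable is extreme if any convex decomposition into observables with the
same outcome set is trivial. -/
def ExtremeObs (A : Obs S) : Prop :=
  ∀ B C : Fin A.n → S → ℝ,
    (∀ x, AffineOn S (B x)) → (∀ x s, 0 ≤ B x s) → (∀ s, ∑ x, B x s = 1) →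
    (∀ x, AffineOn S (C x)) → (∀ x s, 0 ≤ C x s) → (∀ s, ∑ x, C x s = 1) →
    ∀ lam : ℝ, 0 < lam → lam < 1 →
      (∀ x, A.eff x = lam • B x + (1 - lam) • C x) →
      B = A.eff ∧ C = A.eff

/-- `A` is simulable by the set of observables `𝓑`: `A` is obtained by mixing
finitely many members of `𝓑` (with a common outcome set) and postprocessing. -/
def Simulable (𝓑 : Set (Obs S)) (A : Obs S) : Prop :=
  ∃ (m k : ℕ) (B : Fin m → Obs S) (hk : ∀ i, (B i).n = k)
    (p : Fin m → ℝ) (ν : Fin m → Fin k → Fin A.n → ℝ),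
    (∀ i, B i ∈ 𝓑) ∧
    (∀ i, 0 ≤ p i) ∧ (∑ i, p i = 1) ∧
    (∀ i x y, 0 ≤ ν i x y) ∧ (∀ i x, ∑ y, ν i x y = 1) ∧
    ∀ y s, A.eff y s = ∑ i, ∑ x, p i * ν i x y * (B i).eff (Fin.cast (hk i).symm x) s

/-- The set of all `𝓑`-simulable observables. -/
def simSet (𝓑 : Set (Obs S)) : Set (Obs S) := {A | Simulable 𝓑 A}

/-- `A` is simulation irreducible: it can only be simulated by sets containing an
observable postprocessing equivalent to it. -/
def SimIrreducible (A : Obs S) : Prop :=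
  ∀ 𝓑 : Set (Obs S), Simulable 𝓑 A → ∃ B ∈ 𝓑, PPEquiv A B

section Helpers

lemma mem_convexHull_range_iff {E : Type*} [AddCommGroup E] [Module ℝ E]
    {G : Type*} [Fintype G] [Nonempty G] (g : G → E) (x : E) :
    x ∈ convexHull ℝ (Set.range g) ↔
      ∃ w : G → ℝ, (∀ j, 0 ≤ w j) ∧ (∑ j, w j) = 1 ∧ (∑ j, w j • g j) = x := by
  classical
  constructor
  · intro hx
    rw [convexHull_eq] at hx
    obtain ⟨ι, t, wgt, z, hw0, hw1, hz, hcm⟩ := hx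
    have hex : ∀ i ∈ t, ∃ j, g j = z i := fun i hi => hz i hi
    set F : ι → G := fun i => if h : ∃ j, g j = z i then h.choose else Classical.arbitrary G
      with hF
    have hgF : ∀ i ∈ t, g (F i) = z i := by
      intro i hi
      have h : ∃ j, g j = z i := hex i hi
      simp only [hF, dif_pos h]
      exact h.choose_spec
    refine ⟨fun j => ∑ i ∈ t.filter (fun i => F i = j), wgt i, ?_, ?_, ?_⟩
    · intro j
      exact Finset.sum_nonneg fun i hi => hw0 i (Finset.mem_filter.mp hi).1
    · rw [Finset.sum_fiberwise t F wgt]; exact hw1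
    · calc ∑ j, (∑ i ∈ t.filter (fun i => F i = j), wgt i) • g j
          = ∑ j, ∑ i ∈ t.filter (fun i => F i = j), wgt i • z i := by
            refine Finset.sum_congr rfl fun j _ => ?_
            rw [Finset.sum_smul]
            refine Finset.sum_congr rfl fun i hi => ?_
            obtain ⟨hit, hij⟩ := Finset.mem_filter.mp hi
            rw [← hij, hgF i hit]
        _ = ∑ i ∈ t, wgt i • z i := Finset.sum_fiberwise t F _
        _ = t.centerMass wgt z := (Finset.centerMass_eq_of_sum_1 t z hw1).symm
        _ = x := hcm
  · rintro ⟨w, h0, h1, rfl⟩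
    rw [← Finset.centerMass_eq_of_sum_1 Finset.univ g h1]
    exact Finset.centerMass_mem_convexHull Finset.univ (fun i _ => h0 i)
      (by rw [h1]; exact one_pos) (fun i _ => Set.mem_range_self i)

lemma sum_fin_two' {M : Type*} [AddCommMonoid M] {n : ℕ} (h : n = 2) (f : Fin n → M) :
    ∑ x, f x = f ⟨0, by omega⟩ + f ⟨1, by omega⟩ := by
  subst h
  rw [Fin.sum_univ_two]
  rfl

lemma combo_mem_convexHull {E : Type*} [AddCommGroup E] [Module ℝ E] {T : Set E} {p q : E}
    (hp : p ∈ T) (hq : q ∈ T) (h0 : (0 : E) ∈ T) (hu : p + q ∈ T)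
    {a b : ℝ} (ha0 : 0 ≤ a) (ha1 : a ≤ 1) (hb0 : 0 ≤ b) (hb1 : b ≤ 1) :
    a • p + b • q ∈ convexHull ℝ T := by
  rcases le_total a b with h | h
  · have key : a • p + b • q =
        a • (p + q) + (b - a) • q + (1 - b) • (0 : E) := by module
    rw [key]
    have := Convex.sum_mem (t := (Finset.univ : Finset (Fin 3)))
      (convex_convexHull ℝ T)
      (w := ![a, b - a, 1 - b]) (z := ![p + q, q, 0])
      (by intro i _; fin_cases i <;> simp <;> linarith)
      (by simp [Fin.sum_univ_three])
      (by intro i _; fin_cases i <;> simp <;> exact subset_convexHull ℝ T ‹_›)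
    simpa [Fin.sum_univ_three] using this
  · have key : a • p + b • q =
        b • (p + q) + (a - b) • p + (1 - a) • (0 : E) := by module
    rw [key]
    have := Convex.sum_mem (t := (Finset.univ : Finset (Fin 3)))
      (convex_convexHull ℝ T)
      (w := ![b, a - b, 1 - a]) (z := ![p + q, p, 0])
      (by intro i _; fin_cases i <;> simp <;> linarith)
      (by simp [Fin.sum_univ_three])
      (by intro i _; fin_cases i <;> simp <;> exact subset_convexHull ℝ T ‹_›)
    simpa [Fin.sum_univ_three] using this

lemma effsum_mem_convexHull {V : Type*} [NormedAddCommGroup V] [NormedSpace ℝ V] {S : Set V}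
    {T : Set (S → ℝ)} (C : Obs S) (hC : C.n = 2)
    (hP : C.eff ⟨0, by omega⟩ ∈ T) (hM : C.eff ⟨1, by omega⟩ ∈ T)
    (h0 : (0 : S → ℝ) ∈ T) (hu : (fun _ : S => (1 : ℝ)) ∈ T)
    (ν : Fin C.n → ℝ) (hν0 : ∀ x, 0 ≤ ν x) (hν1 : ∀ x, ν x ≤ 1) :
    (fun s => ∑ x, ν x * C.eff x s) ∈ convexHull ℝ T := by
  have hPM : C.eff ⟨0, by omega⟩ + C.eff ⟨1, by omega⟩ = fun _ : S => (1 : ℝ) := by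
    funext s
    have h2 := C.normalized s
    rw [sum_fin_two' hC (fun x => C.eff x s)] at h2
    simpa using h2
  have key : (fun s => ∑ x, ν x * C.eff x s)
      = ν ⟨0, by omega⟩ • C.eff ⟨0, by omega⟩ + ν ⟨1, by omega⟩ • C.eff ⟨1, by omega⟩ := by
    funext s
    rw [sum_fin_two' hC (fun x => ν x * C.eff x s)]
    rfl
  rw [key]
  exact combo_mem_convexHull hP hM h0 (by rw [hPM]; exact hu)
    (hν0 _) (hν1 _) (hν0 _) (hν1 _)

end Helpers
/-- for dichotomic observables `B⁽¹⁾,…,B⁽ᵐ⁾` with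
`{u, B⁽¹⁾₊, …, B⁽ᵐ⁾₊}` linearly independent, an observable `A` is simulable by them
if and only if every effect of `A` lies in the convex hull of their effects together
with the zero and unit effects. -/
theorem statement16 {V : Type*} [NormedAddCommGroup V] [NormedSpace ℝ V]
    [FiniteDimensional ℝ V] {S : Set V}
    (hScomp : IsCompact S) (hSconv : Convex ℝ S) (hSne : S.Nonempty)
    (m : ℕ) (hm : 0 < m) (B : Fin m → Obs S) (hd : ∀ i, (B i).n = 2)
    (hli : LinearIndependent ℝ (fun o : Option (Fin m) =>
      o.elim (fun _ : S => (1 : ℝ))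
        (fun i => (B i).eff ⟨0, by have := hd i; omega⟩)))
    (A : Obs S) :
    Simulable (Set.range B) A ↔
      ∀ y : Fin A.n, A.eff y ∈
        convexHull ℝ
          ({e : S → ℝ | ∃ i x, e = (B i).eff x} ∪ {0, fun _ => (1 : ℝ)}) := by
    classical
  -- notation
  set T : Set (S → ℝ) :=
    {e : S → ℝ | ∃ i x, e = (B i).eff x} ∪ {0, fun _ => (1 : ℝ)} with hT
  have hTP : ∀ (C : Obs S), C ∈ Set.range B → ∀ x, C.eff x ∈ T := by
    rintro C ⟨j, rfl⟩ x
    exact Or.inl ⟨j, x, rfl⟩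
  have h0T : (0 : S → ℝ) ∈ T := Or.inr (Or.inl rfl)
  have huT : (fun _ : S => (1 : ℝ)) ∈ T := Or.inr (Or.inr rfl)
  constructor
  · -- forward direction
    rintro ⟨m', k, B', hk, p, ν, hmem, hp0, hp1, hν0, hν1, heq⟩ y
    have hm' : m' ≠ 0 := by
      rintro rfl
      simp at hp1
    have i0 : Fin m' := ⟨0, Nat.pos_of_ne_zero hm'⟩
    have hn2 : ∀ i : Fin m', (B' i).n = 2 := by
      intro i
      obtain ⟨j, hj⟩ := hmem i
      rw [← hj]
      exact hd j
    have hk2 : k = 2 := (hk i0).symm.trans (hn2 i0)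
    -- rewrite A.eff y as a convex combination
    have key : A.eff y = ∑ i : Fin m',
        p i • (fun s => ∑ x : Fin (B' i).n, ν i (Fin.cast (hk i) x) y * (B' i).eff x s) := by
      funext s
      rw [Finset.sum_apply]
      rw [heq y s]
      refine Finset.sum_congr rfl fun i _ => ?_
      rw [Pi.smul_apply, smul_eq_mul, Finset.mul_sum]
      refine Fintype.sum_equiv (finCongr (hk i).symm) _ _ fun x => ?_
      have hc : Fin.cast (hk i) (Fin.cast (hk i).symm x) = x := rfl
      simp only [finCongr_apply, hc]
      ring
    rw [key]
    refine Convex.sum_mem (convex_convexHull ℝ T) (fun i _ => hp0 i) hp1 fun i _ => ?_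
    refine effsum_mem_convexHull (B' i) (hn2 i) (hTP (B' i) (hmem i) _) (hTP (B' i) (hmem i) _)
      h0T huT _ (fun x => hν0 i _ y) (fun x => ?_)
    calc ν i (Fin.cast (hk i) x) y ≤ ∑ y', ν i (Fin.cast (hk i) x) y' :=
          Finset.single_le_sum (fun y' _ => hν0 i _ y') (Finset.mem_univ y)
      _ = 1 := hν1 i _
  · -- backward direction
    intro h
    set g : (Fin m × Bool) ⊕ Bool → (S → ℝ) := fun j =>
      match j with
      | Sum.inl (i, true) => (B i).eff ⟨0, by have := hd i; omega⟩
      | Sum.inl (i, false) => (B i).eff ⟨1, by have := hd i; omega⟩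
      | Sum.inr true => fun _ => 1
      | Sum.inr false => 0
      with hg
    have hTg : T = Set.range g := by
      apply Set.Subset.antisymm
      · rintro e (⟨i, x, rfl⟩ | he)
        · have hx : (x : ℕ) = 0 ∨ (x : ℕ) = 1 := by
            have h2 := x.2
            have := hd i
            omega
          rcases hx with hx | hx
          · refine ⟨Sum.inl (i, true), ?_⟩
            show (B i).eff ⟨0, by have := hd i; omega⟩ = (B i).eff x
            apply congrArg
            apply Fin.ext
            simp [hx]
          · refine ⟨Sum.inl (i, false), ?_⟩
            show (B i).eff ⟨1, by have := hd i; omega⟩ = (B i).eff x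
            apply congrArg
            apply Fin.ext
            simp [hx]
        · rcases he with rfl | he
          · exact ⟨Sum.inr false, rfl⟩
          · rw [Set.mem_singleton_iff] at he
            rw [he]
            exact ⟨Sum.inr true, rfl⟩
      · rintro e ⟨j, rfl⟩
        rcases j with ⟨i, b⟩ | b
        · cases b
          · exact Or.inl ⟨i, _, rfl⟩
          · exact Or.inl ⟨i, _, rfl⟩
        · cases b
          · exact h0T
          · exact huT
    haveI : Nonempty ((Fin m × Bool) ⊕ Bool) := ⟨Sum.inr true⟩
    have h' : ∀ y, ∃ w : ((Fin m × Bool) ⊕ Bool) → ℝ,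
        (∀ j, 0 ≤ w j) ∧ (∑ j, w j) = 1 ∧ (∑ j, w j • g j) = A.eff y := fun y =>
      (mem_convexHull_range_iff g _).mp (by rw [← hTg]; exact h y)
    choose w hw0 hw1 hw2 using h'
    set P : Fin m → S → ℝ := fun i => (B i).eff ⟨0, by have := hd i; omega⟩ with hP
    set M : Fin m → S → ℝ := fun i => (B i).eff ⟨1, by have := hd i; omega⟩ with hM
    set al : Fin A.n → ℝ := fun y => w y (Sum.inr true) with hal
    set sc : Fin A.n → Fin m → ℝ := fun y i => w y (Sum.inl (i, true)) with hsc
    set tc : Fin A.n → Fin m → ℝ := fun y i => w y (Sum.inl (i, false)) with htc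
    have hPM : ∀ i s, P i s + M i s = 1 := by
      intro i s
      have h2 := (B i).normalized s
      rw [sum_fin_two' (hd i) (fun x => (B i).eff x s)] at h2
      exact h2
    have hAy : ∀ y s, A.eff y s = (∑ i, (sc y i * P i s + tc y i * M i s)) + al y := by
      intro y s
      have hcf := congrFun (hw2 y) s
      rw [Finset.sum_apply] at hcf
      rw [← hcf, Fintype.sum_sum_type, Fintype.sum_prod_type]
      simp only [Fintype.sum_bool, Pi.smul_apply, smul_eq_mul, hg, hal, hsc, htc]
      simp
    set Sc : Fin m → ℝ := fun i => ∑ y, sc y i with hSc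
    set Tc : Fin m → ℝ := fun i => ∑ y, tc y i with hTcdef
    set lam : ℝ := ∑ y, al y with hlamdef
    have hMP : ∀ i s, M i s = 1 - P i s := fun i s => by have := hPM i s; linarith
    have hid : ∀ s : S, (lam + ∑ i, Tc i - 1) + ∑ i, (Sc i - Tc i) * P i s = 0 := by
      intro s
      have h1s : (1 : ℝ) = lam + ∑ i, (Sc i * P i s + Tc i * M i s) := by
        conv_lhs => rw [← A.normalized s]
        calc ∑ y, A.eff y s
            = ∑ y, ((∑ i, (sc y i * P i s + tc y i * M i s)) + al y) :=
              Finset.sum_congr rfl fun y _ => hAy y s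
          _ = (∑ i, ∑ y, (sc y i * P i s + tc y i * M i s)) + lam := by
              rw [Finset.sum_add_distrib, Finset.sum_comm]
          _ = lam + ∑ i, (Sc i * P i s + Tc i * M i s) := by
              rw [add_comm]
              congr 1
              refine Finset.sum_congr rfl fun i _ => ?_
              rw [Finset.sum_add_distrib, ← Finset.sum_mul, ← Finset.sum_mul]
      have h3 : ∑ i, (Sc i * P i s + Tc i * M i s)
          = ∑ i, (Tc i + (Sc i - Tc i) * P i s) :=
        Finset.sum_congr rfl fun i _ => by rw [hMP i s]; ring
      rw [h3, Finset.sum_add_distrib] at h1s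
      linarith
    have hli' := Fintype.linearIndependent_iff.mp hli
    have hcz := hli' (fun o : Option (Fin m) =>
      o.elim (lam + ∑ i, Tc i - 1) (fun i => Sc i - Tc i)) (by
        funext s
        rw [Finset.sum_apply, Fintype.sum_option]
        simp only [Option.elim, Pi.smul_apply, smul_eq_mul]
        have := hid s
        simpa [hP] using this)
    have hST : ∀ i, Sc i = Tc i := by
      intro i
      have := hcz (some i)
      simp only [Option.elim] at this
      linarith
    have hlam1 : lam + ∑ i, Tc i = 1 := by
      have := hcz none
      simp only [Option.elim] at this
      linarith
    have hal0 : ∀ y, 0 ≤ al y := fun y => hw0 y _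
    have hsc0 : ∀ y i, 0 ≤ sc y i := fun y i => hw0 y _
    have htc0 : ∀ y i, 0 ≤ tc y i := fun y i => hw0 y _
    have hlam0 : 0 ≤ lam := Finset.sum_nonneg fun y _ => hal0 y
    have hTc0 : ∀ i, 0 ≤ Tc i := fun i => Finset.sum_nonneg fun y _ => htc0 y i
    have hm0 : (0 : ℝ) < m := by exact_mod_cast hm
    have hAn : 0 < A.n := by
      rcases Nat.eq_zero_or_pos A.n with hz | hz
      · exfalso
        obtain ⟨v0, hv0⟩ := hSne
        have hnorm := A.normalized ⟨v0, hv0⟩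
        haveI : IsEmpty (Fin A.n) := by rw [hz]; infer_instance
        rw [Finset.univ_eq_empty, Finset.sum_empty] at hnorm
        norm_num at hnorm
      · exact hz
    set y₀ : Fin A.n := ⟨0, hAn⟩ with hy₀
    refine ⟨m, 2, B, hd, fun i => Tc i + lam / m,
      fun i x y => if Tc i + lam / m = 0 then (if y = y₀ then 1 else 0)
        else (if x = (0 : Fin 2) then (sc y i + al y / m) / (Tc i + lam / m)
              else (tc y i + al y / m) / (Tc i + lam / m)),
      fun i => Set.mem_range_self i, ?_, ?_, ?_, ?_, ?_⟩
    · intro i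
      exact add_nonneg (hTc0 i) (div_nonneg hlam0 hm0.le)
    · rw [Finset.sum_add_distrib, Finset.sum_const, Finset.card_univ, Fintype.card_fin,
        nsmul_eq_mul, mul_div_cancel₀ _ hm0.ne']
      linarith
    · intro i x y
      dsimp only
      split_ifs
      · norm_num
      · norm_num
      · exact div_nonneg (add_nonneg (hsc0 y i) (div_nonneg (hal0 y) hm0.le))
          (add_nonneg (hTc0 i) (div_nonneg hlam0 hm0.le))
      · exact div_nonneg (add_nonneg (htc0 y i) (div_nonneg (hal0 y) hm0.le))
          (add_nonneg (hTc0 i) (div_nonneg hlam0 hm0.le))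
    · intro i x
      by_cases hpi : Tc i + lam / m = 0
      · simp [hpi]
      · by_cases hx : x = (0 : Fin 2)
        · simp only [if_neg hpi, if_pos hx]
          rw [← Finset.sum_div, Finset.sum_add_distrib, ← Finset.sum_div]
          rw [show (∑ y, sc y i) = Tc i from hST i, show (∑ y, al y) = lam from rfl]
          exact div_self hpi
        · simp only [if_neg hpi, if_neg hx]
          rw [← Finset.sum_div, Finset.sum_add_distrib, ← Finset.sum_div]
          rw [show (∑ y, tc y i) = Tc i from rfl, show (∑ y, al y) = lam from rfl]
          exact div_self hpi
    · intro y s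
      have hc0 : ∀ i : Fin m, (B i).eff (Fin.cast (hd i).symm (0 : Fin 2)) s = P i s :=
        fun i => rfl
      have hc1 : ∀ i : Fin m, (B i).eff (Fin.cast (hd i).symm (1 : Fin 2)) s = M i s :=
        fun i => rfl
      have step : ∀ i : Fin m,
          (∑ x : Fin 2, (Tc i + lam / m) *
            (if Tc i + lam / m = 0 then (if y = y₀ then 1 else 0)
              else (if x = (0 : Fin 2) then (sc y i + al y / m) / (Tc i + lam / m)
                else (tc y i + al y / m) / (Tc i + lam / m))) *
            (B i).eff (Fin.cast (hd i).symm x) s)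
          = (sc y i + al y / m) * P i s + (tc y i + al y / m) * M i s := by
        intro i
        rw [Fin.sum_univ_two, hc0 i, hc1 i]
        by_cases hpi : Tc i + lam / m = 0
        · have hTi : Tc i = 0 :=
            le_antisymm (by nlinarith [div_nonneg hlam0 hm0.le]) (hTc0 i)
          have hlz : lam = 0 := by
            have hdz : lam / m = 0 := by linarith
            rcases div_eq_zero_iff.mp hdz with h' | h'
            · exact h'
            · exact absurd h' hm0.ne'
          have hsz : sc y i = 0 := by
            have hs0 : Sc i = 0 := by rw [hST i, hTi]
            exact (Finset.sum_eq_zero_iff_of_nonneg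
              (fun y' _ => hsc0 y' i)).mp hs0 y (Finset.mem_univ y)
          have htz : tc y i = 0 :=
            (Finset.sum_eq_zero_iff_of_nonneg
              (fun y' _ => htc0 y' i)).mp hTi y (Finset.mem_univ y)
          have haz : al y = 0 :=
            (Finset.sum_eq_zero_iff_of_nonneg
              (fun y' _ => hal0 y')).mp hlz y (Finset.mem_univ y)
          rw [hpi]
          simp [hsz, htz, haz]
        · have e1 : ¬((1 : Fin 2) = 0) := by decide
          simp only [if_neg hpi, if_pos rfl, if_neg e1, if_true]
          have hx : ∀ a : ℝ, (Tc i + lam / m) * (a / (Tc i + lam / m)) = a := fun a => by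
            rw [mul_comm]
            exact div_mul_cancel₀ a hpi
          rw [hx, hx]
      refine Eq.trans ?_ (Finset.sum_congr rfl fun i _ => (step i).symm)
      calc A.eff y s = ∑ i, (sc y i * P i s + tc y i * M i s) + al y := hAy y s
        _ = ∑ i, ((sc y i + al y / m) * P i s + (tc y i + al y / m) * M i s) := by
            have hcg : ∀ i ∈ Finset.univ,
                (sc y i + al y / m) * P i s + (tc y i + al y / m) * M i s
                  = (sc y i * P i s + tc y i * M i s) + al y / m := fun i _ => by
              linear_combination (al y / m) * (hPM i s)
            rw [Finset.sum_congr rfl hcg,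
              show (∑ i : Fin m, (sc y i * P i s + tc y i * M i s + al y / m))
                  = (∑ i : Fin m, (sc y i * P i s + tc y i * M i s))
                    + (∑ _i : Fin m, al y / m) from Finset.sum_add_distrib,
              Finset.sum_const, Finset.card_univ, Fintype.card_fin, nsmul_eq_mul,
              mul_div_cancel₀ _ hm0.ne']
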